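/- Let W : ℝ → ℝ be twice differentiable with W'(0) = 0 and |W''(x)| ≤ K̄|x|^α for all x ∈ ℝ, where K̄ > 0 and α ≥ 0. Let λ ≥ 0, set w_n = exp(λ|n|), and let u : ℤ → ℝ be such that (w_n u_n²)_{n∈ℤ} is summable. Then Σ_{n∈ℤ} w_n (W'(u_{n+1}) + W'(u_{n−1}) − 2W'(u_n))² ≤ 8 K̄² (1 + e^λ) (Σ_{n∈ℤ} w_n u_n²)^{α+1}. -/

import Mathlib

open Real

/-! The mean value theorem from `0` gives `|W'(x)| ≤ K |x|^α |x|`. Since `w_n ≥ 1`, every `u_n²`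
is at most `S = Σ w_n u_n²`, hence `Σ w_n W'(u_n)² ≤ K² S^α · S`. The discrete Laplacian then costs
the factor `8 (1 + e^λ)`: `(x + y - 2z)² ≤ 4x² + 4y² + 8z²`, and moving the weight `w_n` to a
neighbouring site costs at most `e^λ`. -/

lemma abs_le_mul_rpow_mul_abs_of_abs_deriv_le {f : ℝ → ℝ} {K a : ℝ}
    (hf : Differentiable ℝ f) (hf0 : f 0 = 0) (ha : 0 ≤ a)
    (hbound : ∀ y, |deriv f y| ≤ K * |y| ^ a) (x : ℝ) :
    |f x| ≤ K * |x| ^ a * |x| := by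
  have hderiv : ∀ y ∈ Metric.closedBall (0 : ℝ) |x|, ‖deriv f y‖ ≤ K * |x| ^ a := by
    intro y hy
    rw [mem_closedBall_zero_iff, norm_eq_abs] at hy
    calc ‖deriv f y‖ = |deriv f y| := norm_eq_abs _
      _ ≤ K * |y| ^ a := hbound y
      _ ≤ K * |x| ^ a := by
        have hK : 0 ≤ K := by simpa using (abs_nonneg _).trans (hbound 1)
        gcongr
  simpa [hf0] using (convex_closedBall (0 : ℝ) |x|).norm_image_sub_le_of_norm_deriv_le
    (fun y _ => hf y) hderiv (Metric.mem_closedBall_self (abs_nonneg x)) (by simp)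

lemma exp_mul_abs_le_exp_mul_exp_mul_abs {lam x y : ℝ} (hlam : 0 ≤ lam) (hxy : |x - y| ≤ 1) :
    exp (lam * |x|) ≤ exp lam * exp (lam * |y|) := by
  rw [← exp_add, exp_le_exp]
  have hxy' : |x| ≤ 1 + |y| := by linarith [abs_sub_abs_le_abs_sub x y]
  linarith [mul_le_mul_of_nonneg_left hxy' hlam]

lemma summable_and_tsum_weighted_sq_comp_le {ι : Type*} {w u : ι → ℝ} {f : ℝ → ℝ} {K a : ℝ}
    (hw : ∀ n, 1 ≤ w n) (ha : 0 ≤ a) (hf : ∀ x, |f x| ≤ K * |x| ^ a * |x|)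
    (hsum : Summable fun n => w n * u n ^ 2) :
    (Summable fun n => w n * f (u n) ^ 2) ∧
      ∑' n, w n * f (u n) ^ 2 ≤ K ^ 2 * (∑' n, w n * u n ^ 2) ^ (a + 1) := by
  set S := ∑' n, w n * u n ^ 2
  have hw0 : ∀ n, 0 ≤ w n := fun n => zero_le_one.trans (hw n)
  have hnonneg : ∀ n, 0 ≤ w n * u n ^ 2 := fun n => mul_nonneg (hw0 n) (sq_nonneg _)
  have hle : ∀ n, w n * f (u n) ^ 2 ≤ K ^ 2 * S ^ a * (w n * u n ^ 2) := by
    intro n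
    have hS : u n ^ 2 ≤ S := by
      nlinarith [hsum.le_tsum n fun m _ => hnonneg m, hw n, sq_nonneg (u n)]
    have hfu : f (u n) ^ 2 ≤ K ^ 2 * S ^ a * u n ^ 2 :=
      calc f (u n) ^ 2 = |f (u n)| ^ 2 := (sq_abs _).symm
        _ ≤ (K * |u n| ^ a * |u n|) ^ 2 := pow_le_pow_left₀ (abs_nonneg _) (hf _) 2
        _ = K ^ 2 * (u n ^ 2) ^ a * u n ^ 2 := by
          rw [mul_pow, mul_pow, rpow_pow_comm (abs_nonneg _), sq_abs]
        _ ≤ K ^ 2 * S ^ a * u n ^ 2 := by gcongr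
    exact (mul_le_mul_of_nonneg_left hfu (hw0 n)).trans_eq (by ring)
  have hsum' : Summable fun n => w n * f (u n) ^ 2 :=
    (hsum.mul_left _).of_nonneg_of_le (fun n => mul_nonneg (hw0 n) (sq_nonneg _)) hle
  refine ⟨hsum', ?_⟩
  calc ∑' n, w n * f (u n) ^ 2 ≤ ∑' n, K ^ 2 * S ^ a * (w n * u n ^ 2) :=
        hsum'.tsum_le_tsum hle (hsum.mul_left _)
    _ = K ^ 2 * (S ^ a * S) := by rw [tsum_mul_left, mul_assoc]
    _ = K ^ 2 * S ^ (a + 1) := by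
        rw [rpow_add_one' (tsum_nonneg hnonneg) (by linarith)]

lemma summable_and_tsum_weighted_sq_laplacian_le {w v : ℤ → ℝ} {C : ℝ}
    (hw : ∀ n, 0 ≤ w n) (hwsucc : ∀ n, w n ≤ C * w (n + 1)) (hwpred : ∀ n, w n ≤ C * w (n - 1))
    (hsum : Summable fun n => w n * v n ^ 2) :
    (Summable fun n => w n * (v (n + 1) + v (n - 1) - 2 * v n) ^ 2) ∧
      ∑' n, w n * (v (n + 1) + v (n - 1) - 2 * v n) ^ 2
        ≤ 8 * (1 + C) * ∑' n, w n * v n ^ 2 := by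
  obtain ⟨S, hS⟩ := hsum
  rw [hS.tsum_eq]
  have hsucc : HasSum (fun n => w (n + 1) * v (n + 1) ^ 2) S :=
    ((Equiv.addRight (1 : ℤ)).hasSum_iff (f := fun n => w n * v n ^ 2)).mpr hS
  have hpred : HasSum (fun n => w (n - 1) * v (n - 1) ^ 2) S :=
    ((Equiv.subRight (1 : ℤ)).hasSum_iff (f := fun n => w n * v n ^ 2)).mpr hS
  have hM := ((hsucc.add hpred).mul_left (4 * C)).add (hS.mul_left 8)
  rw [show 4 * C * (S + S) + 8 * S = 8 * (1 + C) * S by ring] at hM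
  have hle : ∀ n, w n * (v (n + 1) + v (n - 1) - 2 * v n) ^ 2
      ≤ 4 * C * (w (n + 1) * v (n + 1) ^ 2 + w (n - 1) * v (n - 1) ^ 2) + 8 * (w n * v n ^ 2) := by
    intro n
    have hsq : (v (n + 1) + v (n - 1) - 2 * v n) ^ 2
        ≤ 4 * v (n + 1) ^ 2 + 4 * v (n - 1) ^ 2 + 8 * v n ^ 2 := by
      linarith [sq_nonneg (v (n + 1) - v (n - 1)), sq_nonneg (v (n + 1) + v n),
        sq_nonneg (v (n - 1) + v n)]
    have h1 := mul_le_mul_of_nonneg_right (hwsucc n) (sq_nonneg (v (n + 1)))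
    have h2 := mul_le_mul_of_nonneg_right (hwpred n) (sq_nonneg (v (n - 1)))
    linarith [mul_le_mul_of_nonneg_left hsq (hw n)]
  have hsum' : Summable fun n => w n * (v (n + 1) + v (n - 1) - 2 * v n) ^ 2 :=
    hM.summable.of_nonneg_of_le (fun n => mul_nonneg (hw n) (sq_nonneg _)) hle
  exact ⟨hsum', hasSum_le hle hsum'.hasSum hM⟩

theorem stmt8_general (W : ℝ → ℝ) (K a lam : ℝ) (u : ℤ → ℝ) (w : ℤ → ℝ)
    (hW2 : Differentiable ℝ (deriv W))
    (hW'0 : deriv W 0 = 0) (ha : 0 ≤ a)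
    (hgrow : ∀ x : ℝ, |deriv (deriv W) x| ≤ K * |x| ^ a)
    (hlam : 0 ≤ lam)
    (hw : ∀ n : ℤ, w n = Real.exp (lam * |(n : ℝ)|))
    (hsum : Summable fun n : ℤ => w n * (u n) ^ 2) :
    (Summable fun n : ℤ =>
      w n * (deriv W (u (n + 1)) + deriv W (u (n - 1)) - 2 * deriv W (u n)) ^ 2) ∧
    (∑' n : ℤ, w n * (deriv W (u (n + 1)) + deriv W (u (n - 1)) - 2 * deriv W (u n)) ^ 2)
      ≤ 8 * K ^ 2 * (1 + Real.exp lam) * (∑' n : ℤ, w n * (u n) ^ 2) ^ (a + 1) := by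
  have hw_one : ∀ n, 1 ≤ w n := fun n => (hw n).symm ▸ one_le_exp (by positivity)
  have hwshift : ∀ n m : ℤ, |(n - m : ℝ)| ≤ 1 → w n ≤ exp lam * w m := fun n m h => by
    simpa only [hw] using exp_mul_abs_le_exp_mul_exp_mul_abs hlam h
  obtain ⟨hsumW', htsumW'⟩ := summable_and_tsum_weighted_sq_comp_le hw_one ha
    (abs_le_mul_rpow_mul_abs_of_abs_deriv_le hW2 hW'0 ha hgrow) hsum
  obtain ⟨hsumN, htsumN⟩ := summable_and_tsum_weighted_sq_laplacian_le
    (fun n => zero_le_one.trans (hw_one n)) (fun n => hwshift n (n + 1) (by push_cast; simp))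
    (fun n => hwshift n (n - 1) (by push_cast; simp)) hsumW'
  refine ⟨hsumN, htsumN.trans ?_⟩
  calc 8 * (1 + exp lam) * ∑' n, w n * deriv W (u n) ^ 2
      ≤ 8 * (1 + exp lam) * (K ^ 2 * (∑' n, w n * u n ^ 2) ^ (a + 1)) := by gcongr
    _ = _ := by ring

/-- Weighted bound on the range of the nonlinear operator
`(N(u))_n = W'(u_{n+1}) + W'(u_{n−1}) − 2W'(u_n)` on the exponentially weighted
space `ℓ²_w` with `w_n = exp(λ|n|)`. -/
theorem stmt8 (W : ℝ → ℝ) (K a lam : ℝ) (u : ℤ → ℝ) (w : ℤ → ℝ)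
    (hW1 : Differentiable ℝ W) (hW2 : Differentiable ℝ (deriv W))
    (hW'0 : deriv W 0 = 0) (hK : 0 < K) (ha : 0 ≤ a)
    (hgrow : ∀ x : ℝ, |deriv (deriv W) x| ≤ K * |x| ^ a)
    (hlam : 0 ≤ lam)
    (hw : ∀ n : ℤ, w n = Real.exp (lam * |(n : ℝ)|))
    (hsum : Summable fun n : ℤ => w n * (u n) ^ 2) :
    (Summable fun n : ℤ =>
      w n * (deriv W (u (n + 1)) + deriv W (u (n - 1)) - 2 * deriv W (u n)) ^ 2) ∧
    (∑' n : ℤ, w n * (deriv W (u (n + 1)) + deriv W (u (n - 1)) - 2 * deriv W (u n)) ^ 2)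
      ≤ 8 * K ^ 2 * (1 + Real.exp lam) * (∑' n : ℤ, w n * (u n) ^ 2) ^ (a + 1) :=
  stmt8_general W K a lam u w hW2 hW'0 ha hgrow hlam hw hsum
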